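/- For each i with 2 ≤ i ≤ m and every integer r > 0, the word length of φ^r(a_i) in F equals Σ_{j=0}^{i-1} C(r, j), and the word length of φ^{-r}(a_i) in F equals Σ_{j=0}^{i-1} C(r+j-1, j), where C(n, k) denotes the binomial coefficient (with C(r, j) interpreted as 0 when j > r). -/

import Mathlib

open FreeGroup SemidirectProduct

/-- Words on the letters `a₁^{±1}, …, a_m^{±1}` (`(i, true)` is `a_{i+1}`,
`(i, false)` is `a_{i+1}⁻¹`, with 0-based `Fin`-indexing of the generators). -/
abbrev FWord (m : ℕ) := List (Fin m × Bool)

/-- A word is freely reduced. -/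
def Reduced {m : ℕ} (w : FWord m) : Prop := FreeGroup.reduce w = w

/-- `φ` is the automorphism of `F = F(a₁, …, a_m)` with `φ(a₁) = a₁` and
`φ(aᵢ) = aᵢ aᵢ₋₁` for `2 ≤ i ≤ m`. -/
def IsHydraAut (m : ℕ) (φ : FreeGroup (Fin m) ≃* FreeGroup (Fin m)) : Prop :=
  ∀ i : Fin m, φ (FreeGroup.of i) =
    if i.val = 0 then FreeGroup.of i
    else FreeGroup.of i *
      FreeGroup.of (⟨i.val - 1, Nat.lt_of_le_of_lt (Nat.sub_le _ _) i.isLt⟩ : Fin m)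

/-- The free-by-cyclic group `H_m = F ⋊_φ ℤ`; here `s = inr (ofAdd 1)` and the defining
relation `s⁻¹ aᵢ s = φ(aᵢ)` holds.  The normal form `ũ s^p` is the element
`⟨ũ, Multiplicative.ofAdd p⟩`. -/
abbrev Hgrp (m : ℕ) (φ : FreeGroup (Fin m) ≃* FreeGroup (Fin m)) :=
  FreeGroup (Fin m) ⋊[zpowersHom (MulAut (FreeGroup (Fin m))) φ⁻¹] Multiplicative ℤ

/-- Letters of words over the generators of `H_m`: `some i` is `a_{i+1}`, `none` is `s`. -/
abbrev HWord (m : ℕ) := List (Option (Fin m) × Bool)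

def hLetter {m : ℕ} (φ : FreeGroup (Fin m) ≃* FreeGroup (Fin m)) (x : Option (Fin m) × Bool) :
    Hgrp m φ :=
  match x.1 with
  | some i => cond x.2 (SemidirectProduct.inl (FreeGroup.of i))
      (SemidirectProduct.inl (FreeGroup.of i))⁻¹
  | none => cond x.2 (SemidirectProduct.inr (Multiplicative.ofAdd (1:ℤ)))
      (SemidirectProduct.inr (Multiplicative.ofAdd (1:ℤ)))⁻¹

/-- The element of `H_m` represented by a word on `a₁^{±1}, …, a_m^{±1}, s^{±1}`. -/
def evalH {m : ℕ} (φ : FreeGroup (Fin m) ≃* FreeGroup (Fin m)) (w : HWord m) : Hgrp m φ :=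
  (w.map (hLetter φ)).prod

/-- Word length in `H_m` w.r.t. the generating set `{a₁, …, a_m, s}`. -/
noncomputable def lenH {m : ℕ} (φ : FreeGroup (Fin m) ≃* FreeGroup (Fin m)) (g : Hgrp m φ) : ℕ :=
  sInf {n | ∃ w : HWord m, evalH φ w = g ∧ w.length = n}

/-- Word length in `F` w.r.t. the generating set `{a₁, …, a_m}`. -/
noncomputable def lenF {m : ℕ} (g : FreeGroup (Fin m)) : ℕ :=
  sInf {n | ∃ w : FWord m, FreeGroup.mk w = g ∧ w.length = n}

/-- The rank of a word: the maximal `i` such that `aᵢ^{±1}` occurs in it (a letter with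
`Fin`-index `j` is `a_{j+1}`, so it contributes `j+1`); the empty word has rank `0`. -/
def wrank {m : ℕ} (w : FWord m) : ℕ := (w.map (fun x => x.1.val + 1)).foldr max 0

/-- The four types of rank-`i` pieces: `aᵢ u`, `u aᵢ⁻¹`, `aᵢ u aᵢ⁻¹`, `u`. -/
inductive PieceType | head | tail | both | plain
deriving DecidableEq

/-- `π` is a rank-`i` piece of the given type: `aᵢ u`, `u aᵢ⁻¹`, `aᵢ u aᵢ⁻¹` or `u`,
where `u` is a (possibly empty) word of rank at most `i - 1`.  Pieces of the first three
types have strict rank `i`. -/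
def IsPieceType {m : ℕ} (i : ℕ) (t : PieceType) (π : FWord m) : Prop :=
  match t with
  | .head => ∃ (x : Fin m × Bool) (u : FWord m),
      π = x :: u ∧ x.1.val + 1 = i ∧ x.2 = true ∧ wrank u < i
  | .tail => ∃ (x : Fin m × Bool) (u : FWord m),
      π = u ++ [x] ∧ x.1.val + 1 = i ∧ x.2 = false ∧ wrank u < i
  | .both => ∃ (j : Fin m) (u : FWord m),
      π = (j, true) :: (u ++ [(j, false)]) ∧ j.val + 1 = i ∧ wrank u < i
  | .plain => wrank π < i

def IsPiece {m : ℕ} (i : ℕ) (π : FWord m) : Prop := ∃ t, IsPieceType i t π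

/-- The rank-`i` piece decomposition of `w`: a decomposition into rank-`i` pieces
with the minimal possible number of pieces. -/
def IsPieceDecomp {m : ℕ} (i : ℕ) (w : FWord m) (L : List (FWord m)) : Prop :=
  L.flatten = w ∧ (∀ π ∈ L, IsPiece i π) ∧
    ∀ L' : List (FWord m), L'.flatten = w → (∀ π ∈ L', IsPiece i π) → L.length ≤ L'.length

/-- The number of pieces in the rank-`i` decomposition of `w`, for `i = wrank w`. -/
noncomputable def piecesCount {m : ℕ} (w : FWord m) : ℕ :=
  sInf {p | ∃ L : List (FWord m),
    L.flatten = w ∧ (∀ π ∈ L, IsPiece (wrank w) π) ∧ L.length = p}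

/-- The number of pieces of an element of the free group. -/
noncomputable def piecesCountF {m : ℕ} (g : FreeGroup (Fin m)) : ℕ :=
  piecesCount (FreeGroup.toWord g)

/-!
Unfolding `φ^{r+1}(a_{k+1}) = φ^r(a_{k+1}) φ^r(a_k)` and
`φ^{-(r+1)}(a_{k+1}) = φ^{-r}(a_{k+1}) φ^{-(r+1)}(a_k)⁻¹` gives explicit words for `φ^{±r}(aᵢ)`.
The first has only positive letters; in the second nothing cancels at the junctions, because
the last letter of `φ^{-r}(a_k)` is `a_k`, or `a_{k-1}⁻¹` once `r, k > 0`. So both words are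
reduced, and their lengths obey Pascal-type recursions, solved by `∑_{j ≤ k} C(r, j)` and by
`C(r + k, k) = ∑_{j ≤ k} C(r + j - 1, j)`.
-/

namespace FreeGroup

variable {α : Type*} {L L₁ L₂ : List (α × Bool)}

theorem IsReduced.invRev [DecidableEq α] (h : IsReduced L) : IsReduced (invRev L) :=
  isReduced_iff_reduce_eq.2 <| by rw [reduce_invRev, h.reduce_eq]

theorem IsReduced.append (h₁ : IsReduced L₁) (h₂ : IsReduced L₂)
    (h : ∀ a ∈ L₁.getLast?, ∀ b ∈ L₂.head?, a.1 = b.1 → a.2 = b.2) : IsReduced (L₁ ++ L₂) :=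
  List.isChain_append.2 ⟨h₁, h₂, h⟩

theorem isReduced_of_forall_snd_eq (b : Bool) (h : ∀ x ∈ L, x.2 = b) : IsReduced L :=
  List.Pairwise.isChain <| List.pairwise_of_forall_mem_list fun x hx y hy _ =>
    (h x hx).trans (h y hy).symm

theorem head?_invRev (L : List (α × Bool)) :
    (invRev L).head? = L.getLast?.map fun x => (x.1, !x.2) := by
  simp [invRev, List.head?_reverse, List.getLast?_map]

end FreeGroup

theorem lenF_eq_norm {m : ℕ} (g : FreeGroup (Fin m)) : lenF g = g.norm := by
  refine IsLeast.csInf_eq ⟨⟨g.toWord, mk_toWord, rfl⟩, ?_⟩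
  rintro _ ⟨w, rfl, rfl⟩
  rw [FreeGroup.norm, toWord_mk]
  exact reduce.red.length_le

theorem lenF_mk_of_isReduced {m : ℕ} {w : FWord m} (h : IsReduced w) :
    lenF (mk w) = w.length := by
  rw [lenF_eq_norm, FreeGroup.norm, toWord_mk, h.reduce_eq]

theorem Nat.sum_range_choose_succ_succ (r k : ℕ) :
    ∑ j ∈ Finset.range (k + 2), (r + 1).choose j =
      ∑ j ∈ Finset.range (k + 2), r.choose j + ∑ j ∈ Finset.range (k + 1), r.choose j := by
  rw [Finset.sum_range_succ' _ (k + 1), Finset.sum_range_succ' (fun j => r.choose j) (k + 1)]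
  simp only [Nat.choose_succ_succ, Finset.sum_add_distrib, Nat.choose_zero_right]
  ring

theorem Fin.ofNat_add_one_ne {m j : ℕ} [NeZero m] (hj : j + 1 < m) :
    Fin.ofNat m (j + 1) ≠ Fin.ofNat m j := by
  simp [Fin.ext_iff, Nat.mod_eq_of_lt hj, Nat.mod_eq_of_lt (Nat.lt_of_succ_lt hj)]

section HydraWords

variable (m : ℕ) [NeZero m]

-- `hydraWord m r k` and `hydraInvWord m r k` spell `φ^r(a_{k+1})` and `φ^{-r}(a_{k+1})`.
def hydraWord : ℕ → ℕ → FWord m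
  | 0, k => [(Fin.ofNat m k, true)]
  | _ + 1, 0 => [(Fin.ofNat m 0, true)]
  | r + 1, k + 1 => hydraWord r (k + 1) ++ hydraWord r k

def hydraInvWord : ℕ → ℕ → FWord m
  | 0, k => [(Fin.ofNat m k, true)]
  | _ + 1, 0 => [(Fin.ofNat m 0, true)]
  | r + 1, k + 1 => hydraInvWord r (k + 1) ++ invRev (hydraInvWord (r + 1) k)
  termination_by r k => (r, k)

variable {m}

theorem hydraWord_zero_right (r : ℕ) : hydraWord m r 0 = [(Fin.ofNat m 0, true)] := by
  cases r <;> rfl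

theorem hydraInvWord_zero_right (r : ℕ) : hydraInvWord m r 0 = [(Fin.ofNat m 0, true)] := by
  cases r <;> rw [hydraInvWord]

theorem snd_of_mem_hydraWord {r k : ℕ} {x : Fin m × Bool} (hx : x ∈ hydraWord m r k) :
    x.2 = true := by
  induction r generalizing k with
  | zero => simp_all [hydraWord]
  | succ r ih =>
    cases k with
    | zero => simp_all [hydraWord]
    | succ k => rcases List.mem_append.1 hx with hx | hx <;> exact ih hx

theorem isReduced_hydraWord (r k : ℕ) : IsReduced (hydraWord m r k) :=
  isReduced_of_forall_snd_eq true fun _ => snd_of_mem_hydraWord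

theorem length_hydraWord (r k : ℕ) :
    (hydraWord m r k).length = ∑ j ∈ Finset.range (k + 1), r.choose j := by
  induction r generalizing k with
  | zero => simp [hydraWord, Finset.sum_range_succ']
  | succ r ih =>
    cases k with
    | zero => simp [hydraWord]
    | succ k => rw [hydraWord, List.length_append, ih, ih, Nat.sum_range_choose_succ_succ]

theorem length_hydraInvWord (r k : ℕ) : (hydraInvWord m r k).length = (r + k).choose k := by
  induction r generalizing k with
  | zero => simp [hydraInvWord]
  | succ r ih =>
    induction k with
    | zero => simp [hydraInvWord]
    | succ k ihk =>
      rw [hydraInvWord, List.length_append, invRev_length, ih, ihk,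
        show r + 1 + (k + 1) = r + 1 + k + 1 by omega, Nat.choose_succ_succ',
        show r + 1 + k = r + (k + 1) by omega, add_comm]

theorem head?_hydraInvWord (r k : ℕ) :
    (hydraInvWord m r k).head? = some (Fin.ofNat m k, true) := by
  induction r generalizing k with
  | zero => simp [hydraInvWord]
  | succ r ih =>
    cases k with
    | zero => simp [hydraInvWord]
    | succ k => simp [hydraInvWord, List.head?_append, ih]

theorem getLast?_hydraInvWord (r k : ℕ) :
    (hydraInvWord m r k).getLast? = some
      (if r = 0 ∨ k = 0 then (Fin.ofNat m k, true) else (Fin.ofNat m (k - 1), false)) := by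
  cases r with
  | zero => simp [hydraInvWord]
  | succ r =>
    cases k with
    | zero => simp [hydraInvWord]
    | succ k =>
      rw [hydraInvWord, List.getLast?_append, invRev, List.getLast?_reverse, List.head?_map,
        head?_hydraInvWord]
      simp

theorem isReduced_hydraInvWord {r k : ℕ} (hk : k < m) : IsReduced (hydraInvWord m r k) := by
  induction r generalizing k with
  | zero => rw [hydraInvWord]; exact .singleton
  | succ r ih =>
    induction k with
    | zero => rw [hydraInvWord]; exact .singleton
    | succ k ihk =>
      rw [hydraInvWord]
      refine (ih hk).append (ihk (by omega)).invRev ?_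
      rw [getLast?_hydraInvWord, head?_invRev, getLast?_hydraInvWord]
      rcases r with _ | r <;> rcases k with _ | k
      · simpa using Fin.ofNat_add_one_ne hk
      · simp
      · simp
      · simpa using Fin.ofNat_add_one_ne (Nat.lt_of_succ_lt hk)

end HydraWords

namespace IsHydraAut

variable {m : ℕ} [NeZero m] {φ : FreeGroup (Fin m) ≃* FreeGroup (Fin m)}
  (hφ : IsHydraAut m φ)
include hφ

theorem apply_of_zero : φ (of (Fin.ofNat m 0)) = of (Fin.ofNat m 0) := by
  simpa using hφ (Fin.ofNat m 0)

theorem apply_of_add_one {k : ℕ} (hk : k + 1 < m) :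
    φ (of (Fin.ofNat m (k + 1))) = of (Fin.ofNat m (k + 1)) * of (Fin.ofNat m k) := by
  rw [hφ, if_neg (by simp [Nat.mod_eq_of_lt hk])]
  congr 2
  ext
  simp [Nat.mod_eq_of_lt hk, Nat.mod_eq_of_lt (Nat.lt_of_succ_lt hk)]

theorem inv_apply_of_zero : φ⁻¹ (of (Fin.ofNat m 0)) = of (Fin.ofNat m 0) := by
  rw [MulAut.inv_apply, MulEquiv.symm_apply_eq, hφ.apply_of_zero]

theorem inv_apply_of_add_one {k : ℕ} (hk : k + 1 < m) :
    φ⁻¹ (of (Fin.ofNat m (k + 1))) =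
      of (Fin.ofNat m (k + 1)) * (φ⁻¹ (of (Fin.ofNat m k)))⁻¹ := by
  rw [MulAut.inv_apply, MulEquiv.symm_apply_eq, _root_.map_mul, _root_.map_inv,
    MulAut.inv_apply, MulEquiv.apply_symm_apply, hφ.apply_of_add_one hk, mul_inv_cancel_right]

theorem mk_hydraWord {r k : ℕ} (hk : k < m) :
    mk (hydraWord m r k) = (φ ^ r) (of (Fin.ofNat m k)) := by
  induction r generalizing k with
  | zero => rfl
  | succ r ih =>
    rw [pow_succ, MulAut.mul_apply]
    cases k with
    | zero => rw [hydraWord_zero_right, hφ.apply_of_zero, ← ih hk, hydraWord_zero_right]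
    | succ k =>
      rw [hydraWord, hφ.apply_of_add_one hk, _root_.map_mul, ← ih hk,
        ← ih (Nat.lt_of_succ_lt hk), ← mul_mk]

theorem mk_hydraInvWord {r k : ℕ} (hk : k < m) :
    mk (hydraInvWord m r k) = (φ⁻¹ ^ r) (of (Fin.ofNat m k)) := by
  induction r generalizing k with
  | zero => rw [hydraInvWord]; rfl
  | succ r ih =>
    induction k with
    | zero =>
      rw [hydraInvWord_zero_right, pow_succ, MulAut.mul_apply, hφ.inv_apply_of_zero, ← ih hk,
        hydraInvWord_zero_right]
    | succ k ihk =>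
      rw [hydraInvWord, ← mul_mk, ← inv_mk, ihk (Nat.lt_of_succ_lt hk), ih hk]
      simp only [pow_succ, MulAut.mul_apply]
      rw [hφ.inv_apply_of_add_one hk, _root_.map_mul, _root_.map_inv]

end IsHydraAut

/-- for `2 ≤ i ≤ m` and `r > 0`,
`|φ^r(aᵢ)|_F = Σ_{j=0}^{i-1} C(r, j)` and `|φ^{-r}(aᵢ)|_F = Σ_{j=0}^{i-1} C(r+j-1, j)`. -/
theorem stmt_8 (m : ℕ)
    (φ : FreeGroup (Fin m) ≃* FreeGroup (Fin m)) (hφ : IsHydraAut m φ)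
    (i : ℕ) (hi : 2 ≤ i) (him : i ≤ m) (r : ℕ) :
    lenF ((φ ^ (r : ℤ)) (FreeGroup.of (⟨i - 1, by omega⟩ : Fin m))) =
      ∑ j ∈ Finset.range i, r.choose j ∧
    lenF ((φ ^ (-(r : ℤ))) (FreeGroup.of (⟨i - 1, by omega⟩ : Fin m))) =
      ∑ j ∈ Finset.range i, (r + j - 1).choose j := by
  have : NeZero m := ⟨by omega⟩
  obtain ⟨k, rfl⟩ : ∃ k, i = k + 1 := ⟨i - 1, by omega⟩
  have hk : k < m := by omega
  have hgen : (⟨k + 1 - 1, by omega⟩ : Fin m) = Fin.ofNat m k :=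
    Fin.ext (by simp [Nat.mod_eq_of_lt hk])
  rw [hgen]
  constructor
  · rw [zpow_natCast, ← hφ.mk_hydraWord hk, lenF_mk_of_isReduced (isReduced_hydraWord r k),
      length_hydraWord]
  · rw [zpow_neg, zpow_natCast, ← inv_pow, ← hφ.mk_hydraInvWord hk,
      lenF_mk_of_isReduced (isReduced_hydraInvWord hk), length_hydraInvWord]
    simp_rw [← Nat.multichoose_eq]
    rw [Nat.sum_range_multichoose, add_comm, Nat.choose_symm_add]
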